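/- arXiv:1712.03234 — 2 statements merged into one kernel-verified Lean document; each statement's English description precedes it below -/
import Mathlib

section
/- Let Λ be a row-finite k-graph and Λ̄ its desourcification. Suppose μ,ν ∈ Λ̄ satisfy μ ∼_{Λ̄} ν. If μ = [x;(m,m+d(μ))] for some x ∈ Λ^{≤∞} and m ∈ ℕ^k, then ν = [x;(m,m+d(ν))]. -/
/-!
Common definitions: higher-rank graphs (`k`-graphs), boundary paths, the
equivalence relation `∼_Λ`, the periodicity group `Per(Λ)`, maximal tails,
hereditary/saturated sets, and (an axiomatization of) the Farthing
desourcification `Λ̄` of a locally convex row-finite `k`-graph `Λ`.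
-/

/-- A `k`-graph: a countable small category `Λ` equipped with a degree functor
`d : Λ → ℕ^k` satisfying the factorization property.  Elements of `Path` are
the morphisms ("paths"); the vertices are the identity morphisms (the paths `v`
with `r v = v`, equivalently of degree `0`).  The composition `comp μ ν` is
only meaningful when `s μ = r ν`. -/
structure KGraph (k : ℕ) where
  Path : Type
  countable_path : Countable Path
  nonempty_path : Nonempty Path
  r : Path → Path
  s : Path → Path
  d : Path → Fin k → ℕ
  comp : Path → Path → Path
  d_r : ∀ μ, d (r μ) = 0
  d_s : ∀ μ, d (s μ) = 0
  r_r : ∀ μ, r (r μ) = r μ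
  s_r : ∀ μ, s (r μ) = r μ
  r_s : ∀ μ, r (s μ) = s μ
  s_s : ∀ μ, s (s μ) = s μ
  comp_id : ∀ μ, comp μ (s μ) = μ
  id_comp : ∀ μ, comp (r μ) μ = μ
  r_comp : ∀ μ ν, s μ = r ν → r (comp μ ν) = r μ
  s_comp : ∀ μ ν, s μ = r ν → s (comp μ ν) = s ν
  d_comp : ∀ μ ν, s μ = r ν → d (comp μ ν) = d μ + d ν
  comp_assoc : ∀ μ ν ρ, s μ = r ν → s ν = r ρ →
    comp (comp μ ν) ρ = comp μ (comp ν ρ)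
  factorization : ∀ (lam : Path) (m n : Fin k → ℕ), d lam = m + n →
    ∃! p : Path × Path, d p.1 = m ∧ d p.2 = n ∧ s p.1 = r p.2 ∧ lam = comp p.1 p.2

namespace KGraph

variable {k : ℕ}

/-- The vertices of a `k`-graph are its identity morphisms. -/
def IsVertex (Λ : KGraph k) (v : Λ.Path) : Prop := Λ.r v = v

/-- `Λ.boundedPaths n` is the set `Λ^{≤ n}`: paths `λ` with `d λ ≤ n` such that
`d(λ)_i < n_i` implies `s(λ)Λ^{e_i} = ∅`. -/
def boundedPaths (Λ : KGraph k) (n : Fin k → ℕ) : Set Λ.Path :=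
  {lam | Λ.d lam ≤ n ∧ ∀ i : Fin k, Λ.d lam i < n i →
    ∀ e, Λ.r e = Λ.s lam → Λ.d e ≠ Pi.single i 1}

/-- `Λ` is row-finite if every `vΛ^n` is finite. -/
def RowFinite (Λ : KGraph k) : Prop :=
  ∀ (v : Λ.Path) (n : Fin k → ℕ), Λ.IsVertex v →
    {lam | Λ.r lam = v ∧ Λ.d lam = n}.Finite

/-- `Λ` is locally convex if for `i ≠ j`, `λ ∈ vΛ^{e_i}` and `μ ∈ vΛ^{e_j}`
one has `s(λ)Λ^{e_j} ≠ ∅` (by symmetry in `i, j` this also gives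
`s(μ)Λ^{e_i} ≠ ∅`). -/
def LocallyConvex (Λ : KGraph k) : Prop :=
  ∀ i j : Fin k, i ≠ j → ∀ lam mu : Λ.Path, Λ.r lam = Λ.r mu →
    Λ.d lam = Pi.single i 1 → Λ.d mu = Pi.single j 1 →
    ∃ lam', Λ.r lam' = Λ.s lam ∧ Λ.d lam' = Pi.single j 1

end KGraph

/-- A boundary path of `Λ`: a degree-preserving functor `x : Ω_{k,m} → Λ`
(`m = deg ∈ (ℕ ∪ {∞})^k`) such that `p ≤ m` and `p_i = m_i` imply
`x(p)Λ^{e_i} = ∅`.  `seg p q` is the path `x(p,q)`, meaningful for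
`p ≤ q ≤ deg`; `seg p p` is the vertex `x(p)`. -/
structure BoundaryPath {k : ℕ} (Λ : KGraph k) where
  deg : Fin k → ℕ∞
  seg : (Fin k → ℕ) → (Fin k → ℕ) → Λ.Path
  seg_d : ∀ p q : Fin k → ℕ, p ≤ q → (∀ i, (q i : ℕ∞) ≤ deg i) →
    Λ.d (seg p q) = q - p
  seg_r : ∀ p q : Fin k → ℕ, p ≤ q → (∀ i, (q i : ℕ∞) ≤ deg i) →
    Λ.r (seg p q) = seg p p
  seg_s : ∀ p q : Fin k → ℕ, p ≤ q → (∀ i, (q i : ℕ∞) ≤ deg i) →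
    Λ.s (seg p q) = seg q q
  seg_comp : ∀ p q t : Fin k → ℕ, p ≤ q → q ≤ t → (∀ i, (t i : ℕ∞) ≤ deg i) →
    Λ.comp (seg p q) (seg q t) = seg p t
  boundary : ∀ p : Fin k → ℕ, (∀ i, (p i : ℕ∞) ≤ deg i) →
    ∀ i : Fin k, (p i : ℕ∞) = deg i →
      ∀ e, Λ.r e = seg p p → Λ.d e ≠ Pi.single i 1

/-- `emin m e` is the coordinatewise minimum `m ∧ e` of `m ∈ ℕ^k` with the
(possibly infinite) degree `e ∈ (ℕ ∪ {∞})^k`, as an element of `ℕ^k`. -/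
noncomputable def emin {k : ℕ} (m : Fin k → ℕ) (e : Fin k → ℕ∞) : Fin k → ℕ :=
  fun i => (min ((m i : ℕ∞)) (e i)).toNat

/-- Equality of boundary paths (of the same degree), as functors. -/
def BPEq {k : ℕ} {Λ : KGraph k} (x y : BoundaryPath Λ) : Prop :=
  x.deg = y.deg ∧ ∀ p q : Fin k → ℕ, p ≤ q → (∀ i, (q i : ℕ∞) ≤ x.deg i) →
    x.seg p q = y.seg p q

/-- `IsExtension Λ lam x y` says that `y = lam · x` is the (unique) boundary
path with `y(0, d lam) = lam` and `y(d lam, d lam + p) = x(0, p)`. -/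
def IsExtension {k : ℕ} (Λ : KGraph k) (lam : Λ.Path) (x y : BoundaryPath Λ) :
    Prop :=
  (∀ i, y.deg i = (Λ.d lam i : ℕ∞) + x.deg i) ∧
  y.seg 0 (Λ.d lam) = lam ∧
  ∀ p : Fin k → ℕ, (∀ i, (p i : ℕ∞) ≤ x.deg i) →
    y.seg (Λ.d lam) (Λ.d lam + p) = x.seg 0 p

/-- The relation `μ ∼_Λ ν`: `s μ = s ν` and `μx = νx` for every boundary path
`x ∈ s(μ)Λ^{≤∞}`. -/
def KGraph.peq {k : ℕ} (Λ : KGraph k) (μ ν : Λ.Path) : Prop :=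
  Λ.s μ = Λ.s ν ∧ ∀ x y z : BoundaryPath Λ, x.seg 0 0 = Λ.s μ →
    IsExtension Λ μ x y → IsExtension Λ ν x z → BPEq y z

/-- `Per(Λ) = {d μ - d ν : μ ∼_Λ ν} ⊆ ℤ^k`. -/
def KGraph.Per {k : ℕ} (Λ : KGraph k) : Set (Fin k → ℤ) :=
  {g | ∃ μ ν : Λ.Path, Λ.peq μ ν ∧ g = fun i => (Λ.d μ i : ℤ) - (Λ.d ν i : ℤ)}

/-- `Λ` is aperiodic if for every vertex `v` there is a boundary path
`x ∈ vΛ^{≤∞}` such that distinct `μ, ν ∈ Λv` have `μx ≠ νx`. -/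
def KGraph.Aperiodic {k : ℕ} (Λ : KGraph k) : Prop :=
  ∀ v : Λ.Path, Λ.IsVertex v → ∃ x : BoundaryPath Λ, x.seg 0 0 = v ∧
    ∀ μ ν : Λ.Path, Λ.s μ = v → Λ.s ν = v → μ ≠ ν →
      ∀ y z : BoundaryPath Λ, IsExtension Λ μ x y → IsExtension Λ ν x z →
        ¬ BPEq y z

/-- A maximal tail: a nonempty set `T` of vertices such that (1) `s λ ∈ T`
implies `r λ ∈ T`; (2) for `v ∈ T` and `n ∈ ℕ^k` there is `λ ∈ vΛ^{≤n}` with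
`s λ ∈ T`; (3) any `v, w ∈ T` are connected via `μ ∈ vΛ`, `ν ∈ wΛ` with
`s μ = s ν`. -/
def KGraph.IsMaximalTail {k : ℕ} (Λ : KGraph k) (T : Set Λ.Path) : Prop :=
  T.Nonempty ∧ (∀ v ∈ T, Λ.IsVertex v) ∧
  (∀ lam : Λ.Path, Λ.s lam ∈ T → Λ.r lam ∈ T) ∧
  (∀ v ∈ T, ∀ n : Fin k → ℕ,
    ∃ lam ∈ Λ.boundedPaths n, Λ.r lam = v ∧ Λ.s lam ∈ T) ∧
  (∀ v ∈ T, ∀ w ∈ T, ∃ μ ν : Λ.Path, Λ.r μ = v ∧ Λ.r ν = w ∧ Λ.s μ = Λ.s ν)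

/-- `H_{Per(Λ)}`: the set of vertices `v` such that for all `μ ∈ vΛ` and
`m ∈ ℕ^k` with `d μ - m ∈ Per(Λ)` there exists `ν ∈ vΛ^m` with `μ ∼_Λ ν`. -/
def KGraph.HPer {k : ℕ} (Λ : KGraph k) : Set Λ.Path :=
  {v | Λ.IsVertex v ∧ ∀ μ : Λ.Path, Λ.r μ = v → ∀ m : Fin k → ℕ,
    (fun i => (Λ.d μ i : ℤ) - (m i : ℤ)) ∈ Λ.Per →
    ∃ ν : Λ.Path, Λ.r ν = v ∧ Λ.d ν = m ∧ Λ.peq μ ν}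

/-- A set of vertices `H` is hereditary if `r λ ∈ H` implies `s λ ∈ H`. -/
def KGraph.Hereditary {k : ℕ} (Λ : KGraph k) (H : Set Λ.Path) : Prop :=
  ∀ lam : Λ.Path, Λ.r lam ∈ H → Λ.s lam ∈ H

/-- A set of vertices `H` is saturated if `s(vΛ^{≤n}) ⊆ H` for some `n ∈ ℕ^k`
implies `v ∈ H`. -/
def KGraph.Saturated {k : ℕ} (Λ : KGraph k) (H : Set Λ.Path) : Prop :=
  ∀ v : Λ.Path, Λ.IsVertex v →
    (∃ n : Fin k → ℕ, ∀ lam ∈ Λ.boundedPaths n, Λ.r lam = v → Λ.s lam ∈ H) →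
    v ∈ H

/-- `Σ(H)`: the smallest saturated set containing `H`. -/
def KGraph.SatClosure {k : ℕ} (Λ : KGraph k) (H : Set Λ.Path) : Set Λ.Path :=
  ⋂₀ {S : Set Λ.Path | H ⊆ S ∧ Λ.Saturated S}

/-- A boundary path `x` is cofinal if every vertex `v` admits `n ≤ d x` with
`vΛx(n) ≠ ∅`. -/
def KGraph.CofinalBP {k : ℕ} (Λ : KGraph k) (x : BoundaryPath Λ) : Prop :=
  ∀ v : Λ.Path, Λ.IsVertex v → ∃ n : Fin k → ℕ,
    (∀ i, (n i : ℕ∞) ≤ x.deg i) ∧ ∃ μ : Λ.Path, Λ.r μ = v ∧ Λ.s μ = x.seg n n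

/-- `Λ` is cofinal if all of its boundary paths are cofinal. -/
def KGraph.Cofinal {k : ℕ} (Λ : KGraph k) : Prop :=
  ∀ x : BoundaryPath Λ, Λ.CofinalBP x

/-- `T(v) = {s μ : μ ∈ vΛ}`, the smallest hereditary set containing `v`. -/
def KGraph.tree {k : ℕ} (Λ : KGraph k) (v : Λ.Path) : Set Λ.Path :=
  {w | ∃ μ : Λ.Path, Λ.r μ = v ∧ Λ.s μ = w}

/-- `Δ(H₁,H₂) = {v ∈ H₁ : T(v) ∩ H₂ = ∅}`. -/
def KGraph.Delta {k : ℕ} (Λ : KGraph k) (H₁ H₂ : Set Λ.Path) : Set Λ.Path :=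
  {v ∈ H₁ | Λ.tree v ∩ H₂ = ∅}

/-- `Ω(H₁,H₂) = {v ∈ H₁ \ H₂ : T(v) ∩ H₂ ≠ ∅}`. -/
def KGraph.Omega {k : ℕ} (Λ : KGraph k) (H₁ H₂ : Set Λ.Path) : Set Λ.Path :=
  {v ∈ H₁ \ H₂ | (Λ.tree v ∩ H₂).Nonempty}

/-- The relation `H₁ ≻ H₂`. -/
def KGraph.Succ {k : ℕ} (Λ : KGraph k) (H₁ H₂ : Set Λ.Path) : Prop :=
  H₂ ⊆ H₁ ∧ (Λ.Delta H₁ H₂).Nonempty ∧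
  ∀ v ∈ Λ.Omega H₁ H₂, ∃ n : Fin k → ℕ,
    ∀ lam ∈ Λ.boundedPaths n, Λ.r lam = v → Λ.s lam ∈ H₂ ∪ Λ.Delta H₁ H₂

/-- `IsGlue Λ x n y p z` says that `z` is the boundary path
`x(0, n ∧ d x) · σ^{p ∧ d y}(y)`. -/
def IsGlue {k : ℕ} (Λ : KGraph k) (x : BoundaryPath Λ) (n : Fin k → ℕ)
    (y : BoundaryPath Λ) (p : Fin k → ℕ) (z : BoundaryPath Λ) : Prop :=
  (∀ i, z.deg i = (emin n x.deg i : ℕ∞) + (y.deg i - (emin p y.deg i : ℕ∞))) ∧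
  z.seg 0 (emin n x.deg) = x.seg 0 (emin n x.deg) ∧
  ∀ t : Fin k → ℕ, (∀ i, ((emin p y.deg i + t i : ℕ) : ℕ∞) ≤ y.deg i) →
    z.seg (emin n x.deg) (emin n x.deg + t) =
      y.seg (emin p y.deg) (emin p y.deg + t)

/-- The Farthing desourcification `Λ̄ = P_Λ/≈` of `Λ`: a `k`-graph `bar`
without sources whose morphisms are the classes `cls x m n = [x;(m,n)]`
(`x ∈ Λ^{≤∞}`, `m ≤ n ∈ ℕ^k`), where `[x;(m,n)] = [y;(p,q)]` iff
(P1) `x(m ∧ d x, n ∧ d x) = y(p ∧ d y, q ∧ d y)`,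
(P2) `m - m ∧ d x = p - p ∧ d y` and (P3) `n - m = q - p`; together with the
range, source, degree and composition formulas, the canonical embedding
`emb : Λ → Λ̄` (`λ ↦ [λx;(0, d λ)]`) and the projection `proj = π : Λ̄ → Λ`,
`π [x;(m,n)] = [x;(m ∧ d x, n ∧ d x)]`. -/
structure Desourcification {k : ℕ} (Λ : KGraph k) where
  bar : KGraph k
  noSources : ∀ v : bar.Path, bar.IsVertex v → ∀ i : Fin k,
    ∃ e, bar.r e = v ∧ bar.d e = Pi.single i 1
  cls : BoundaryPath Λ → (Fin k → ℕ) → (Fin k → ℕ) → bar.Path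
  cls_surjective : ∀ μ : bar.Path,
    ∃ (x : BoundaryPath Λ) (m : Fin k → ℕ), μ = cls x m (m + bar.d μ)
  cls_eq_iff : ∀ (x : BoundaryPath Λ) (m n : Fin k → ℕ) (y : BoundaryPath Λ)
    (p q : Fin k → ℕ), m ≤ n → p ≤ q →
    (cls x m n = cls y p q ↔
      (x.seg (emin m x.deg) (emin n x.deg) =
          y.seg (emin p y.deg) (emin q y.deg) ∧
        m - emin m x.deg = p - emin p y.deg ∧
        n - m = q - p))
  d_cls : ∀ (x : BoundaryPath Λ) (m n : Fin k → ℕ), m ≤ n →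
    bar.d (cls x m n) = n - m
  r_cls : ∀ (x : BoundaryPath Λ) (m n : Fin k → ℕ), m ≤ n →
    bar.r (cls x m n) = cls x m m
  s_cls : ∀ (x : BoundaryPath Λ) (m n : Fin k → ℕ), m ≤ n →
    bar.s (cls x m n) = cls x n n
  comp_cls : ∀ (x y : BoundaryPath Λ) (m n p q : Fin k → ℕ), m ≤ n → p ≤ q →
    bar.s (cls x m n) = bar.r (cls y p q) →
    ∀ z : BoundaryPath Λ, IsGlue Λ x n y p z →
      bar.comp (cls x m n) (cls y p q) = cls z m (n + (q - p))
  emb : Λ.Path → bar.Path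
  emb_injective : Function.Injective emb
  emb_r : ∀ lam : Λ.Path, emb (Λ.r lam) = bar.r (emb lam)
  emb_s : ∀ lam : Λ.Path, emb (Λ.s lam) = bar.s (emb lam)
  emb_d : ∀ lam : Λ.Path, bar.d (emb lam) = Λ.d lam
  emb_comp : ∀ μ ν : Λ.Path, Λ.s μ = Λ.r ν →
    emb (Λ.comp μ ν) = bar.comp (emb μ) (emb ν)
  emb_cls : ∀ (lam : Λ.Path) (x y : BoundaryPath Λ), x.seg 0 0 = Λ.s lam →
    IsExtension Λ lam x y → emb lam = cls y 0 (Λ.d lam)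
  proj : bar.Path → Λ.Path
  proj_cls : ∀ (x : BoundaryPath Λ) (m n : Fin k → ℕ), m ≤ n →
    proj (cls x m n) = x.seg (emin m x.deg) (emin n x.deg)

/-- `IsInfClass D x p z` says that `z` is the infinite path `[x;(p,∞)]` of
`Λ̄`, i.e. `z(m,n) = [x;(p+m, p+n)]`. -/
def IsInfClass {k : ℕ} {Λ : KGraph k} (D : Desourcification Λ)
    (x : BoundaryPath Λ) (p : Fin k → ℕ) (z : BoundaryPath D.bar) : Prop :=
  (∀ i, z.deg i = (⊤ : ℕ∞)) ∧
  ∀ m n : Fin k → ℕ, m ≤ n → z.seg m n = D.cls x (p + m) (p + n)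

/-- `IsShift x n y` says that `y = σ^n(x)` is the `n`-shifted boundary path,
`σ^n(x)(p,q) = x(p+n, q+n)`, of degree `d x - n`. -/
def IsShift {k : ℕ} {Λ : KGraph k} (x : BoundaryPath Λ) (n : Fin k → ℕ)
    (y : BoundaryPath Λ) : Prop :=
  (∀ i, y.deg i = x.deg i - (n i : ℕ∞)) ∧
  ∀ p q : Fin k → ℕ, p ≤ q → (∀ i, (q i : ℕ∞) ≤ y.deg i) →
    y.seg p q = x.seg (p + n) (q + n)

/-!
Let `X = [x;(m + d μ, ∞)]`, an infinite path of `Λ̄` starting at `s μ`. Then `μX = [x;(m,∞)]`,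
so `μ ∼ ν` forces `νX = [x;(m,∞)]` as well, and the initial segment of degree `d ν` of this
path is both `ν` and `[x;(m, m + d ν)]`. The path `νX` itself is built from the factorization
property: its segment `(a, b)` is cut out of the finite path `ν X(0, b)`.
-/

namespace KGraph

variable {k : ℕ} {Λ : KGraph k}

theorem eq_and_eq_of_comp_eq_comp {α β α' β' : Λ.Path} (hαβ : Λ.s α = Λ.r β)
    (hαβ' : Λ.s α' = Λ.r β') (hd : Λ.d α = Λ.d α')
    (h : Λ.comp α β = Λ.comp α' β') : α = α' ∧ β = β' := by
  have hdβ : Λ.d β' = Λ.d β := by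
    have := congrArg Λ.d h
    rw [Λ.d_comp _ _ hαβ, Λ.d_comp _ _ hαβ', hd] at this
    exact (add_left_cancel this).symm
  have huniq := (Λ.factorization (Λ.comp α β) (Λ.d α) (Λ.d β) (Λ.d_comp _ _ hαβ)).unique
    (y₁ := (α, β)) (y₂ := (α', β')) ⟨rfl, rfl, hαβ, rfl⟩ ⟨hd.symm, hdβ, hαβ', h⟩
  exact Prod.mk.inj huniq

variable (Λ) in
def IsSegment (lam : Λ.Path) (a b : Fin k → ℕ) (σ : Λ.Path) : Prop :=
  ∃ α β, Λ.s α = Λ.r σ ∧ Λ.s σ = Λ.r β ∧ Λ.d α = a ∧ a + Λ.d σ = b ∧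
    lam = Λ.comp α (Λ.comp σ β)

variable (Λ) in
open Classical in
noncomputable def segment (lam : Λ.Path) (a b : Fin k → ℕ) : Λ.Path :=
  if h : ∃ σ, Λ.IsSegment lam a b σ then h.choose else lam

theorem IsSegment.unique {lam σ τ : Λ.Path} {a b : Fin k → ℕ}
    (hσ : Λ.IsSegment lam a b σ) (hτ : Λ.IsSegment lam a b τ) : σ = τ := by
  obtain ⟨α, β, hασ, hσβ, hα, hdσ, rfl⟩ := hσ
  obtain ⟨α', β', hα'τ, hτβ', hα', hdτ, h⟩ := hτ
  have hσβ' := (eq_and_eq_of_comp_eq_comp (by rwa [Λ.r_comp _ _ hσβ])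
    (by rwa [Λ.r_comp _ _ hτβ']) (hα.trans hα'.symm) h).2
  exact (eq_and_eq_of_comp_eq_comp hσβ hτβ' (add_left_cancel (hdσ.trans hdτ.symm)) hσβ').1

theorem exists_isSegment {lam : Λ.Path} {a b : Fin k → ℕ} (hab : a ≤ b)
    (hb : b ≤ Λ.d lam) : ∃ σ, Λ.IsSegment lam a b σ := by
  obtain ⟨c, rfl⟩ := exists_add_of_le hab
  obtain ⟨e, he⟩ := exists_add_of_le hb
  obtain ⟨⟨α, τ⟩, ⟨hα, hτ, hατ, rfl⟩, -⟩ :=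
    Λ.factorization lam a (c + e) (by rw [he, add_assoc])
  obtain ⟨⟨σ, β⟩, ⟨hσ, -, hσβ, rfl⟩, -⟩ := Λ.factorization τ c e hτ
  exact ⟨σ, α, β, by rw [hατ, Λ.r_comp _ _ hσβ], hσβ, hα, by rw [hσ], rfl⟩

theorem segment_eq {lam σ : Λ.Path} {a b : Fin k → ℕ} (h : Λ.IsSegment lam a b σ) :
    Λ.segment lam a b = σ := by
  have hex : ∃ σ, Λ.IsSegment lam a b σ := ⟨σ, h⟩
  rw [segment, dif_pos hex]
  exact hex.choose_spec.unique h

theorem isSegment_segment {lam : Λ.Path} {a b : Fin k → ℕ} (hab : a ≤ b)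
    (hb : b ≤ Λ.d lam) : Λ.IsSegment lam a b (Λ.segment lam a b) := by
  obtain ⟨σ, h⟩ := exists_isSegment hab hb
  rwa [segment_eq h]

section Segment

variable {lam : Λ.Path} {a b c : Fin k → ℕ}

theorem d_segment (hab : a ≤ b) (hb : b ≤ Λ.d lam) : Λ.d (Λ.segment lam a b) = b - a := by
  obtain ⟨σ, hσ⟩ := exists_isSegment hab hb
  rw [segment_eq hσ]
  obtain ⟨-, -, -, -, -, hd, -⟩ := hσ
  rw [← hd, add_tsub_cancel_left]

theorem r_segment (hab : a ≤ b) (hb : b ≤ Λ.d lam) :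
    Λ.r (Λ.segment lam a b) = Λ.segment lam a a := by
  obtain ⟨σ, hσ⟩ := exists_isSegment hab hb
  rw [segment_eq hσ]
  obtain ⟨α, β, hασ, hσβ, hα, -, rfl⟩ := hσ
  refine (segment_eq ⟨α, Λ.comp σ β, by rw [Λ.r_r, hασ], by rw [Λ.s_r, Λ.r_comp _ _ hσβ],
    hα, by rw [Λ.d_r, add_zero], by rw [← Λ.r_comp σ β hσβ, Λ.id_comp]⟩).symm

theorem s_segment (hab : a ≤ b) (hb : b ≤ Λ.d lam) :
    Λ.s (Λ.segment lam a b) = Λ.segment lam b b := by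
  obtain ⟨σ, hσ⟩ := exists_isSegment hab hb
  rw [segment_eq hσ]
  obtain ⟨α, β, hασ, hσβ, hα, hd, rfl⟩ := hσ
  refine (segment_eq ⟨Λ.comp α σ, β, by rw [Λ.s_comp _ _ hασ, Λ.r_s], by rwa [Λ.s_s],
    by rw [Λ.d_comp _ _ hασ, hα, hd], by rw [Λ.d_s, add_zero], ?_⟩).symm
  rw [hσβ, Λ.id_comp, Λ.comp_assoc _ _ _ hασ hσβ]

theorem segment_comp_segment (hab : a ≤ b) (hbc : b ≤ c) (hc : c ≤ Λ.d lam) :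
    Λ.comp (Λ.segment lam a b) (Λ.segment lam b c) = Λ.segment lam a c := by
  obtain ⟨σ, hσ⟩ := exists_isSegment (hab.trans hbc) hc
  rw [segment_eq hσ]
  obtain ⟨α, β, hασ, hσβ, hα, hd, rfl⟩ := hσ
  obtain ⟨e₁, rfl⟩ := exists_add_of_le hab
  obtain ⟨e₂, rfl⟩ := exists_add_of_le hbc
  obtain ⟨⟨σ₁, σ₂⟩, ⟨hσ₁, hσ₂, hσ₁σ₂, rfl⟩, -⟩ :=
    Λ.factorization σ e₁ e₂ (add_left_cancel (by rw [hd, add_assoc]))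
  rw [Λ.r_comp _ _ hσ₁σ₂] at hασ
  rw [Λ.s_comp _ _ hσ₁σ₂] at hσβ
  have hσ₁σ₂β : Λ.s σ₁ = Λ.r (Λ.comp σ₂ β) := by rwa [Λ.r_comp _ _ hσβ]
  have hασ₁ : Λ.s (Λ.comp α σ₁) = Λ.r σ₂ := by rwa [Λ.s_comp _ _ hασ]
  rw [segment_eq ⟨α, Λ.comp σ₂ β, hασ, hσ₁σ₂β, hα, by rw [hσ₁],
      by rw [Λ.comp_assoc _ _ _ hσ₁σ₂ hσβ]⟩,
    segment_eq ⟨Λ.comp α σ₁, β, hασ₁, hσβ, by rw [Λ.d_comp _ _ hασ, hα, hσ₁],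
      by rw [hσ₂], by rw [Λ.comp_assoc _ _ _ hασ hσ₁σ₂β, Λ.comp_assoc _ _ _ hσ₁σ₂ hσβ]⟩]

theorem segment_comp_left {ρ : Λ.Path} (hab : a ≤ b) (hb : b ≤ Λ.d lam)
    (hρ : Λ.s lam = Λ.r ρ) : Λ.segment (Λ.comp lam ρ) a b = Λ.segment lam a b := by
  obtain ⟨σ, hσ⟩ := exists_isSegment hab hb
  rw [segment_eq hσ]
  obtain ⟨α, β, hασ, hσβ, hα, hd, rfl⟩ := hσ
  have hασβ : Λ.s α = Λ.r (Λ.comp σ β) := by rwa [Λ.r_comp _ _ hσβ]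
  have hβρ : Λ.s β = Λ.r ρ := by rw [← hρ, Λ.s_comp _ _ hασβ, Λ.s_comp _ _ hσβ]
  refine segment_eq ⟨α, Λ.comp β ρ, hασ, by rwa [Λ.r_comp _ _ hβρ], hα, hd, ?_⟩
  rw [Λ.comp_assoc _ _ _ hασβ (by rwa [Λ.s_comp _ _ hσβ]), Λ.comp_assoc _ _ _ hσβ hβρ]

theorem segment_comp_right {ν ρ : Λ.Path} (hab : a ≤ b) (hb : b ≤ Λ.d ρ)
    (hνρ : Λ.s ν = Λ.r ρ) :
    Λ.segment (Λ.comp ν ρ) (Λ.d ν + a) (Λ.d ν + b) = Λ.segment ρ a b := by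
  obtain ⟨σ, hσ⟩ := exists_isSegment hab hb
  rw [segment_eq hσ]
  obtain ⟨α, β, hασ, hσβ, hα, hd, rfl⟩ := hσ
  have hασβ : Λ.s α = Λ.r (Λ.comp σ β) := by rwa [Λ.r_comp _ _ hσβ]
  have hνα : Λ.s ν = Λ.r α := by rw [hνρ, Λ.r_comp _ _ hασβ]
  refine segment_eq ⟨Λ.comp ν α, β, by rw [Λ.s_comp _ _ hνα, hασ], hσβ,
    by rw [Λ.d_comp _ _ hνα, hα], by rw [add_assoc, hd], ?_⟩
  rw [Λ.comp_assoc _ _ _ hνα hασβ]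

theorem segment_zero_d (lam : Λ.Path) : Λ.segment lam 0 (Λ.d lam) = lam :=
  segment_eq ⟨Λ.r lam, Λ.s lam, Λ.s_r lam, (Λ.r_s lam).symm, Λ.d_r lam, zero_add _,
    by rw [Λ.comp_id, Λ.id_comp]⟩

end Segment

end KGraph

namespace BoundaryPath

open KGraph

variable {k : ℕ} {Λ : KGraph k} {X : BoundaryPath Λ}

theorem le_deg_of_deg_eq_top (hX : ∀ i, X.deg i = ⊤) (q : Fin k → ℕ) (i : Fin k) :
    (q i : ℕ∞) ≤ X.deg i := by
  rw [hX i]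
  exact le_top

theorem d_seg_zero (hX : ∀ i, X.deg i = ⊤) (b : Fin k → ℕ) : Λ.d (X.seg 0 b) = b := by
  rw [X.seg_d 0 b zero_le (le_deg_of_deg_eq_top hX b), tsub_zero]

theorem s_seg_eq_r_seg (X : BoundaryPath Λ) {a b c : Fin k → ℕ} (hab : a ≤ b) (hbc : b ≤ c)
    (hc : ∀ i, (c i : ℕ∞) ≤ X.deg i) : Λ.s (X.seg a b) = Λ.r (X.seg b c) := by
  rw [X.seg_s a b hab fun i => (WithTop.coe_le_coe.2 (hbc i)).trans (hc i), X.seg_r b c hbc hc]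

theorem s_eq_r_seg_zero {ν : Λ.Path} (hX : ∀ i, X.deg i = ⊤) (hν : Λ.s ν = X.seg 0 0)
    (b : Fin k → ℕ) : Λ.s ν = Λ.r (X.seg 0 b) := by
  rw [X.seg_r 0 b zero_le (le_deg_of_deg_eq_top hX b), hν]

theorem le_d_comp_seg_zero {ν : Λ.Path} (hX : ∀ i, X.deg i = ⊤) (hν : Λ.s ν = X.seg 0 0)
    (b : Fin k → ℕ) : b ≤ Λ.d (Λ.comp ν (X.seg 0 b)) := by
  rw [Λ.d_comp _ _ (s_eq_r_seg_zero hX hν b), d_seg_zero hX]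
  exact le_add_self

theorem segment_comp_seg_zero {ν : Λ.Path} (hX : ∀ i, X.deg i = ⊤) (hν : Λ.s ν = X.seg 0 0)
    {a b c : Fin k → ℕ} (hab : a ≤ b) (hbc : b ≤ c) :
    Λ.segment (Λ.comp ν (X.seg 0 c)) a b = Λ.segment (Λ.comp ν (X.seg 0 b)) a b := by
  have hνb := s_eq_r_seg_zero hX hν b
  have hseg := X.s_seg_eq_r_seg zero_le hbc (le_deg_of_deg_eq_top hX c)
  rw [← X.seg_comp 0 b c zero_le hbc (le_deg_of_deg_eq_top hX c),
    ← Λ.comp_assoc _ _ _ hνb hseg,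
    segment_comp_left hab (le_d_comp_seg_zero hX hν b) (by rwa [Λ.s_comp _ _ hνb])]

noncomputable def extend (X : BoundaryPath Λ) (hX : ∀ i, X.deg i = ⊤) (ν : Λ.Path)
    (hν : Λ.s ν = X.seg 0 0) : BoundaryPath Λ where
  deg _ := ⊤
  seg a b := Λ.segment (Λ.comp ν (X.seg 0 b)) a b
  seg_d a b hab _ := d_segment hab (le_d_comp_seg_zero hX hν b)
  seg_r a b hab _ := by
    rw [r_segment hab (le_d_comp_seg_zero hX hν b), segment_comp_seg_zero hX hν le_rfl hab]
  seg_s a b hab _ := s_segment hab (le_d_comp_seg_zero hX hν b)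
  seg_comp a b c hab hbc _ := by
    rw [← segment_comp_seg_zero hX hν hab hbc,
      segment_comp_segment hab hbc (le_d_comp_seg_zero hX hν c)]
  boundary _ _ _ h := absurd h (ENat.natCast_ne_top _)

theorem isExtension_extend {ν : Λ.Path} (hX : ∀ i, X.deg i = ⊤) (hν : Λ.s ν = X.seg 0 0) :
    IsExtension Λ ν X (X.extend hX ν hν) := by
  refine ⟨fun i => by rw [hX i, add_top]; rfl, ?_, fun p _ => ?_⟩
  · show Λ.segment (Λ.comp ν (X.seg 0 (Λ.d ν))) 0 (Λ.d ν) = ν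
    rw [segment_comp_left zero_le le_rfl (s_eq_r_seg_zero hX hν _), segment_zero_d]
  · show Λ.segment (Λ.comp ν (X.seg 0 (Λ.d ν + p))) (Λ.d ν) (Λ.d ν + p) = X.seg 0 p
    have hright := segment_comp_right (b := p) zero_le
      (by rw [d_seg_zero hX]; exact le_add_self) (s_eq_r_seg_zero hX hν (Λ.d ν + p))
    have hself := segment_zero_d (X.seg 0 p)
    rw [d_seg_zero hX] at hself
    rw [add_zero] at hright
    rw [hright, ← X.seg_comp 0 p (Λ.d ν + p) zero_le le_add_self (le_deg_of_deg_eq_top hX _),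
      segment_comp_left zero_le (d_seg_zero hX p).ge
        (X.s_seg_eq_r_seg zero_le le_add_self (le_deg_of_deg_eq_top hX _)), hself]

end BoundaryPath

theorem coe_emin_apply {k : ℕ} (m : Fin k → ℕ) (e : Fin k → ℕ∞) (i : Fin k) :
    ((emin m e i : ℕ) : ℕ∞) = min (m i : ℕ∞) (e i) :=
  ENat.natCast_toNat (ne_top_of_le_ne_top (ENat.natCast_ne_top _) (min_le_left _ _))

theorem isGlue_self {k : ℕ} (Λ : KGraph k) (x : BoundaryPath Λ) (n : Fin k → ℕ) :
    IsGlue Λ x n x n x :=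
  ⟨fun i => by rw [coe_emin_apply, add_tsub_cancel_of_le (min_le_right _ _)], rfl,
    fun _ _ => rfl⟩

namespace Desourcification

variable {k : ℕ} {Λ : KGraph k} (D : Desourcification Λ)

noncomputable def infPath (x : BoundaryPath Λ) (p : Fin k → ℕ) : BoundaryPath D.bar where
  deg _ := ⊤
  seg a b := D.cls x (p + a) (p + b)
  seg_d a b hab _ := by rw [D.d_cls x _ _ (add_le_add_right hab p), add_tsub_add_eq_tsub_left]
  seg_r a b hab _ := D.r_cls x _ _ (add_le_add_right hab p)
  seg_s a b hab _ := D.s_cls x _ _ (add_le_add_right hab p)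
  seg_comp a b c hab hbc _ := by
    rw [D.comp_cls x x _ _ _ _ (add_le_add_right hab p) (add_le_add_right hbc p)
      (by rw [D.s_cls x _ _ (add_le_add_right hab p), D.r_cls x _ _ (add_le_add_right hbc p)])
      x (isGlue_self Λ x (p + b)), add_tsub_cancel_of_le (add_le_add_right hbc p)]
  boundary _ _ _ h := absurd h (ENat.natCast_ne_top _)

theorem isExtension_infPath {μ : D.bar.Path} {x : BoundaryPath Λ} {m : Fin k → ℕ}
    (hμ : μ = D.cls x m (m + D.bar.d μ)) :
    IsExtension D.bar μ (D.infPath x (m + D.bar.d μ)) (D.infPath x m) := by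
  refine ⟨fun i => (add_top _).symm, ?_, fun t _ => ?_⟩
  · show D.cls x (m + 0) (m + D.bar.d μ) = μ
    rw [add_zero, ← hμ]
  · show D.cls x (m + D.bar.d μ) (m + (D.bar.d μ + t)) =
      D.cls x (m + D.bar.d μ + 0) (m + D.bar.d μ + t)
    rw [add_zero, add_assoc]

end Desourcification

theorem statement2_general {k : ℕ} (Λ : KGraph k)
    (D : Desourcification Λ) (μ ν : D.bar.Path) (h : D.bar.peq μ ν)
    (x : BoundaryPath Λ) (m : Fin k → ℕ)
    (hμ : μ = D.cls x m (m + D.bar.d μ)) :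
    ν = D.cls x m (m + D.bar.d ν) := by
  set X := D.infPath x (m + D.bar.d μ)
  have hX : ∀ i, X.deg i = ⊤ := fun _ => rfl
  have hXμ : X.seg 0 0 = D.bar.s μ := by
    have hsμ := D.s_cls x m (m + D.bar.d μ) le_self_add
    rw [← hμ] at hsμ
    show D.cls x (m + D.bar.d μ + 0) (m + D.bar.d μ + 0) = _
    rw [add_zero, hsμ]
  have hνX : D.bar.s ν = X.seg 0 0 := h.1.symm.trans hXμ.symm
  have hZ := X.isExtension_extend hX hνX
  have hYZ := h.2 X _ _ hXμ (D.isExtension_infPath hμ) hZ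
  calc ν = (X.extend hX ν hνX).seg 0 (D.bar.d ν) := hZ.2.1.symm
    _ = (D.infPath x m).seg 0 (D.bar.d ν) := (hYZ.2 0 _ zero_le fun _ => le_top).symm
    _ = D.cls x m (m + D.bar.d ν) := by
      show D.cls x (m + 0) (m + D.bar.d ν) = _
      rw [add_zero]

/-- Lemma 3.4: Let `Λ` be a row-finite `k`-graph and `Λ̄`
its desourcification.  If `μ ∼_{Λ̄} ν` and `μ = [x;(m, m + d μ)]` for some
`x ∈ Λ^{≤∞}` and `m ∈ ℕ^k`, then `ν = [x;(m, m + d ν)]`. -/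
theorem statement2 {k : ℕ} (Λ : KGraph k) (hrf : Λ.RowFinite)
    (D : Desourcification Λ) (μ ν : D.bar.Path) (h : D.bar.peq μ ν)
    (x : BoundaryPath Λ) (m : Fin k → ℕ)
    (hμ : μ = D.cls x m (m + D.bar.d μ)) :
    ν = D.cls x m (m + D.bar.d ν) :=
  statement2_general Λ D μ ν h x m hμ
end

section
/- Let Λ be a locally convex row-finite k-graph. If Λ^0 is a maximal tail in Λ, then Per(Λ) is a subgroup of ℤ^k. -/
/-!
`0 ∈ Per(Λ)` and `Per(Λ) = -Per(Λ)` because `∼_Λ` is reflexive and symmetric. For sums, `∼_Λ`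
is compatible with composition, so from `μ₁ ∼ ν₁` and `μ₂ ∼ ν₂` one first joins `s(μ₁)` and
`s(μ₂)` to a common vertex `u` by paths `α`, `β` (the maximal tail condition (3)). The pair
`μ₂β ∼ ν₂β` is then traded for a pair `P ∼ Q` with range `u` and the same degree difference:
for a boundary path `w` at `u`, which condition (2) lets us build, `μ₂βw = ν₂βw`, and `P`, `Q`
are the initial segments of `w` cut at `d(μ₂β)` and `d(ν₂β)`. Finally `μ₁αP ∼ ν₁αQ`.
Local convexity is what makes every `μx` (`x ∈ s(μ)Λ^{≤∞}`) a boundary path, so that these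
extensions exist.
-/

lemma exists_le_of_natCast_le_iSup {n : ℕ} {f : ℕ → ℕ} (h : (n : ℕ∞) ≤ ⨆ j, (f j : ℕ∞)) :
    ∃ j, n ≤ f j := by
  by_contra! hlt
  have hle : ⨆ j, (f j : ℕ∞) ≤ (n - 1 : ℕ) :=
    iSup_le fun j => Nat.cast_le.mpr (by have := hlt j; omega)
  have := Nat.cast_le.mp (h.trans hle)
  have := hlt 0
  omega

namespace KGraph

variable {k : ℕ} {Λ : KGraph k}

open Classical in
/-- The factorization `lam = lam(0, n) lam(n, d lam)`; a junk value unless `n ≤ d lam`. -/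
noncomputable def split (Λ : KGraph k) (lam : Λ.Path) (n : Fin k → ℕ) : Λ.Path × Λ.Path :=
  if h : n ≤ Λ.d lam then
    (Λ.factorization lam n (Λ.d lam - n) (add_tsub_cancel_of_le h).symm).exists.choose
  else (lam, Λ.s lam)

noncomputable def initSeg (Λ : KGraph k) (lam : Λ.Path) (n : Fin k → ℕ) : Λ.Path :=
  (Λ.split lam n).1

noncomputable def tailSeg (Λ : KGraph k) (lam : Λ.Path) (n : Fin k → ℕ) : Λ.Path :=
  (Λ.split lam n).2

section Factorization

variable {lam u ρ : Λ.Path} {n p q : Fin k → ℕ}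

lemma split_spec (h : n ≤ Λ.d lam) :
    Λ.d (Λ.initSeg lam n) = n ∧ Λ.d (Λ.tailSeg lam n) = Λ.d lam - n ∧
      Λ.s (Λ.initSeg lam n) = Λ.r (Λ.tailSeg lam n) ∧
      lam = Λ.comp (Λ.initSeg lam n) (Λ.tailSeg lam n) := by
  rw [initSeg, tailSeg, split, dif_pos h]
  exact (Λ.factorization lam n _ (add_tsub_cancel_of_le h).symm).exists.choose_spec

lemma d_initSeg (h : n ≤ Λ.d lam) : Λ.d (Λ.initSeg lam n) = n := (split_spec h).1

lemma d_tailSeg (h : n ≤ Λ.d lam) : Λ.d (Λ.tailSeg lam n) = Λ.d lam - n := (split_spec h).2.1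

lemma s_initSeg (h : n ≤ Λ.d lam) : Λ.s (Λ.initSeg lam n) = Λ.r (Λ.tailSeg lam n) :=
  (split_spec h).2.2.1

lemma comp_initSeg_tailSeg (h : n ≤ Λ.d lam) :
    Λ.comp (Λ.initSeg lam n) (Λ.tailSeg lam n) = lam :=
  (split_spec h).2.2.2.symm

lemma d_comp_le_left (hs : Λ.s u = Λ.r ρ) : Λ.d u ≤ Λ.d (Λ.comp u ρ) := by
  rw [Λ.d_comp _ _ hs]
  exact le_self_add

lemma initSeg_tailSeg_of_comp_eq (hs : Λ.s u = Λ.r ρ) (hlam : Λ.comp u ρ = lam) :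
    Λ.initSeg lam (Λ.d u) = u ∧ Λ.tailSeg lam (Λ.d u) = ρ := by
  have hle : Λ.d u ≤ Λ.d lam := hlam ▸ d_comp_le_left hs
  obtain ⟨hd, -, hs', hc⟩ := split_spec hle
  have hdρ : Λ.d (Λ.tailSeg lam (Λ.d u)) = Λ.d ρ := by
    rw [(split_spec hle).2.1, ← hlam, Λ.d_comp _ _ hs, add_tsub_cancel_left]
  obtain ⟨_, -, huniq⟩ :=
    Λ.factorization lam (Λ.d u) (Λ.d ρ) (by rw [← hlam, Λ.d_comp _ _ hs])
  exact Prod.ext_iff.mp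
    ((huniq _ ⟨hd, hdρ, hs', hc⟩).trans (huniq (u, ρ) ⟨rfl, rfl, hs, hlam.symm⟩).symm)

lemma r_initSeg (h : n ≤ Λ.d lam) : Λ.r (Λ.initSeg lam n) = Λ.r lam := by
  conv_rhs => rw [← comp_initSeg_tailSeg h]
  rw [Λ.r_comp _ _ (s_initSeg h)]

lemma s_tailSeg (h : n ≤ Λ.d lam) : Λ.s (Λ.tailSeg lam n) = Λ.s lam := by
  conv_rhs => rw [← comp_initSeg_tailSeg h]
  rw [Λ.s_comp _ _ (s_initSeg h)]

lemma tailSeg_d_self (lam : Λ.Path) : Λ.tailSeg lam (Λ.d lam) = Λ.s lam :=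
  (initSeg_tailSeg_of_comp_eq (Λ.r_s lam).symm (Λ.comp_id lam)).2

lemma initSeg_of_d_eq (h : Λ.d lam = n) : Λ.initSeg lam n = lam :=
  h ▸ (initSeg_tailSeg_of_comp_eq (Λ.r_s lam).symm (Λ.comp_id lam)).1

lemma tailSeg_of_d_eq (h : Λ.d lam = n) : Λ.tailSeg lam n = Λ.s lam :=
  h ▸ tailSeg_d_self lam

lemma initSeg_zero (lam : Λ.Path) : Λ.initSeg lam 0 = Λ.r lam := by
  simpa only [Λ.d_r] using (initSeg_tailSeg_of_comp_eq (Λ.s_r lam) (Λ.id_comp lam)).1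

lemma tailSeg_zero (lam : Λ.Path) : Λ.tailSeg lam 0 = lam := by
  simpa only [Λ.d_r] using (initSeg_tailSeg_of_comp_eq (Λ.s_r lam) (Λ.id_comp lam)).2

lemma r_eq_s_of_d_eq_zero (h : Λ.d lam = 0) : Λ.r lam = Λ.s lam := by
  rw [← Λ.r_s, ← tailSeg_d_self, h, tailSeg_zero]

lemma initSeg_tailSeg_of_le (hpq : p ≤ q) (hq : q ≤ Λ.d lam) :
    Λ.initSeg lam p = Λ.initSeg (Λ.initSeg lam q) p ∧
      Λ.tailSeg lam p = Λ.comp (Λ.tailSeg (Λ.initSeg lam q) p) (Λ.tailSeg lam q) := by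
  have hp : p ≤ Λ.d (Λ.initSeg lam q) := by rwa [d_initSeg hq]
  have hs : Λ.s (Λ.tailSeg (Λ.initSeg lam q) p) = Λ.r (Λ.tailSeg lam q) := by
    rw [s_tailSeg hp, s_initSeg hq]
  have hcomp : Λ.comp (Λ.initSeg (Λ.initSeg lam q) p)
      (Λ.comp (Λ.tailSeg (Λ.initSeg lam q) p) (Λ.tailSeg lam q)) = lam := by
    rw [← Λ.comp_assoc _ _ _ (s_initSeg hp) hs, comp_initSeg_tailSeg hp,
      comp_initSeg_tailSeg hq]
  have := initSeg_tailSeg_of_comp_eq (by rw [Λ.r_comp _ _ hs, s_initSeg hp]) hcomp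
  rw [d_initSeg hp] at this
  exact this

lemma initSeg_comp_of_le (hs : Λ.s lam = Λ.r ρ) (hn : n ≤ Λ.d lam) :
    Λ.initSeg (Λ.comp lam ρ) n = Λ.initSeg lam n := by
  rw [(initSeg_tailSeg_of_le hn (d_comp_le_left hs)).1,
    (initSeg_tailSeg_of_comp_eq hs rfl).1]

end Factorization

def HasEdge (Λ : KGraph k) (v : Λ.Path) (i : Fin k) : Prop :=
  ∃ e, Λ.r e = v ∧ Λ.d e = Pi.single i 1

lemma mem_boundedPaths_iff {lam : Λ.Path} {n : Fin k → ℕ} :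
    lam ∈ Λ.boundedPaths n ↔
      Λ.d lam ≤ n ∧ ∀ i, Λ.d lam i < n i → ¬ Λ.HasEdge (Λ.s lam) i := by
  simp only [boundedPaths, HasEdge, Set.mem_ofPred_eq, not_exists, not_and, ne_eq]

lemma HasEdge.r_of_s {lam : Λ.Path} {i : Fin k} (h : Λ.HasEdge (Λ.s lam) i) :
    Λ.HasEdge (Λ.r lam) i := by
  obtain ⟨e, he, hde⟩ := h
  have hs : Λ.s lam = Λ.r e := he.symm
  have hle : Pi.single i 1 ≤ Λ.d (Λ.comp lam e) := hde ▸ (Λ.d_comp _ _ hs ▸ le_add_self)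
  exact ⟨_, by rw [r_initSeg hle, Λ.r_comp _ _ hs], d_initSeg hle⟩

/-- Peel off one edge of `lam` at a time; local convexity moves the `e_i`-edge across each. -/
lemma HasEdge.s_of_r (hlc : Λ.LocallyConvex) {lam : Λ.Path} {i : Fin k} (hi : Λ.d lam i = 0)
    (h : Λ.HasEdge (Λ.r lam) i) : Λ.HasEdge (Λ.s lam) i := by
  induction hN : ∑ j, Λ.d lam j using Nat.strong_induction_on generalizing lam with
  | _ N ih =>
    by_cases h0 : Λ.d lam = 0
    · rwa [← r_eq_s_of_d_eq_zero h0]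
    obtain ⟨j, hj⟩ : ∃ j, Λ.d lam j ≠ 0 := by
      by_contra! hc
      exact h0 (funext hc)
    have hij : i ≠ j := by rintro rfl; exact hj hi
    have hle : Pi.single j 1 ≤ Λ.d lam := by
      intro l
      rcases eq_or_ne l j with rfl | hl <;> simp_all; omega
    obtain ⟨e, hre, hde⟩ := h
    obtain ⟨e', hre', hde'⟩ := hlc j i hij.symm (Λ.initSeg lam (Pi.single j 1)) e
      (by rw [r_initSeg hle, hre]) (d_initSeg hle) hde
    have hlt : ∑ l, Λ.d (Λ.tailSeg lam (Pi.single j 1)) l < N := by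
      rw [← hN, d_tailSeg hle]
      refine Finset.sum_lt_sum (fun l _ => tsub_le_self) ⟨j, Finset.mem_univ j, ?_⟩
      simp only [Pi.sub_apply, Pi.single_eq_same]
      omega
    have := ih _ hlt (by simp [d_tailSeg hle, hij, hi])
      ⟨e', by rw [hre', s_initSeg hle], hde'⟩ rfl
    rwa [s_tailSeg hle] at this

lemma HasEdge.s_of_s_initSeg (hlc : Λ.LocallyConvex) {lam : Λ.Path} {n : Fin k → ℕ}
    {i : Fin k} (hn : n ≤ Λ.d lam) (hi : n i = Λ.d lam i)
    (h : Λ.HasEdge (Λ.s (Λ.initSeg lam n)) i) :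
    Λ.HasEdge (Λ.s lam) i := by
  rw [s_initSeg hn] at h
  rw [← s_tailSeg hn]
  exact h.s_of_r hlc (by rw [d_tailSeg hn, Pi.sub_apply, hi, tsub_self])

lemma comp_mem_boundedPaths {lam mu : Λ.Path} {m n : Fin k → ℕ}
    (hl : lam ∈ Λ.boundedPaths m) (hm : mu ∈ Λ.boundedPaths n) (hs : Λ.s lam = Λ.r mu) :
    Λ.comp lam mu ∈ Λ.boundedPaths (m + n) := by
  rw [mem_boundedPaths_iff] at *
  refine ⟨Λ.d_comp _ _ hs ▸ add_le_add hl.1 hm.1, fun i hi hedge => ?_⟩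
  rw [Λ.d_comp _ _ hs, Pi.add_apply, Pi.add_apply] at hi
  rw [Λ.s_comp _ _ hs] at hedge
  by_cases hmi : Λ.d mu i < n i
  · exact hm.2 i hmi hedge
  · exact hl.2 i (by have := hm.1 i; omega) (hs ▸ hedge.r_of_s)

end KGraph

namespace BoundaryPath

variable {k : ℕ} {Λ : KGraph k}

def WithinDeg (x : BoundaryPath Λ) (n : Fin k → ℕ) : Prop := ∀ i, (n i : ℕ∞) ≤ x.deg i

variable {x y : BoundaryPath Λ} {c p q : Fin k → ℕ}

lemma WithinDeg.mono (hq : x.WithinDeg q) (hpq : p ≤ q) : x.WithinDeg p :=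
  fun i => (Nat.cast_le.mpr (hpq i)).trans (hq i)

lemma WithinDeg.of_deg_eq (h : x.deg = y.deg) (hq : x.WithinDeg q) : y.WithinDeg q :=
  fun i => h ▸ hq i

lemma withinDeg_zero (x : BoundaryPath Λ) : x.WithinDeg 0 := fun i => by simp

lemma d_seg_zero_s5 (hq : x.WithinDeg q) : Λ.d (x.seg 0 q) = q := by
  rw [x.seg_d 0 q zero_le hq, tsub_zero]

lemma seg_eq_initSeg_tailSeg (hcp : c ≤ p) (hpq : p ≤ q) (hq : x.WithinDeg q) :
    x.seg c p = Λ.initSeg (x.seg c q) (p - c) ∧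
      x.seg p q = Λ.tailSeg (x.seg c q) (p - c) := by
  have hp := hq.mono hpq
  have hs : Λ.s (x.seg c p) = Λ.r (x.seg p q) := by
    rw [x.seg_s c p hcp hp, x.seg_r p q hpq hq]
  have := KGraph.initSeg_tailSeg_of_comp_eq hs (x.seg_comp c p q hcp hpq hq)
  rw [x.seg_d c p hcp hp] at this
  exact ⟨this.1.symm, this.2.symm⟩

lemma seg_zero_eq_initSeg (hpq : p ≤ q) (hq : x.WithinDeg q) :
    x.seg 0 p = Λ.initSeg (x.seg 0 q) p := by
  simpa only [tsub_zero] using (seg_eq_initSeg_tailSeg zero_le hpq hq).1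

lemma seg_eq_tailSeg (hpq : p ≤ q) (hq : x.WithinDeg q) :
    x.seg p q = Λ.tailSeg (x.seg 0 q) p := by
  simpa only [tsub_zero] using (seg_eq_initSeg_tailSeg zero_le hpq hq).2

noncomputable def ofInitSegs (deg : Fin k → ℕ∞) (c : (Fin k → ℕ) → Λ.Path)
    (hd : ∀ n, (∀ i, (n i : ℕ∞) ≤ deg i) → Λ.d (c n) = n)
    (hc : ∀ n N, n ≤ N → (∀ i, (N i : ℕ∞) ≤ deg i) → Λ.initSeg (c N) n = c n)
    (hb : ∀ p, (∀ i, (p i : ℕ∞) ≤ deg i) → ∀ i, (p i : ℕ∞) = deg i →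
      ¬ Λ.HasEdge (Λ.s (c p)) i) :
    BoundaryPath Λ where
  deg := deg
  seg p q := Λ.tailSeg (c q) p
  seg_d p q hpq hq := by rw [KGraph.d_tailSeg (by rwa [hd q hq]), hd q hq]
  seg_r p q hpq hq := by
    have hp : ∀ i, (p i : ℕ∞) ≤ deg i := fun i => (Nat.cast_le.mpr (hpq i)).trans (hq i)
    rw [← KGraph.s_initSeg (by rwa [hd q hq]), hc p q hpq hq,
      KGraph.tailSeg_of_d_eq (hd p hp)]
  seg_s p q hpq hq := by
    rw [KGraph.s_tailSeg (by rwa [hd q hq]), KGraph.tailSeg_of_d_eq (hd q hq)]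
  seg_comp p q t hpq hqt ht := by
    have hq : q ≤ Λ.d (c t) := by rwa [hd t ht]
    rw [(KGraph.initSeg_tailSeg_of_le hpq hq).2, hc q t hqt ht]
  boundary p hp i hpi e he hde :=
    hb p hp i hpi ⟨e, he.trans (KGraph.tailSeg_of_d_eq (hd p hp)), hde⟩

lemma ofInitSegs_seg_zero {deg c hd hc hb} (q : Fin k → ℕ) :
    (ofInitSegs (Λ := Λ) deg c hd hc hb).seg 0 q = c q :=
  KGraph.tailSeg_zero (c q)

end BoundaryPath

open BoundaryPath

section BPEq

variable {k : ℕ} {Λ : KGraph k} {x y z : BoundaryPath Λ}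

lemma BPEq.symm (h : BPEq x y) : BPEq y x :=
  ⟨h.1.symm, fun p q hpq hq => (h.2 p q hpq (WithinDeg.of_deg_eq h.1.symm hq)).symm⟩

lemma BPEq.trans (h : BPEq x y) (h' : BPEq y z) : BPEq x z :=
  ⟨h.1.trans h'.1, fun p q hpq hq => (h.2 p q hpq hq).trans
    (h'.2 p q hpq (WithinDeg.of_deg_eq h.1 hq))⟩

lemma bpeq_of_seg_zero (hdeg : x.deg = y.deg)
    (h : ∀ q, x.WithinDeg q → x.seg 0 q = y.seg 0 q) : BPEq x y :=
  ⟨hdeg, fun p q hpq hq => by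
    rw [seg_eq_tailSeg hpq hq, seg_eq_tailSeg hpq (WithinDeg.of_deg_eq hdeg hq), h q hq]⟩

end BPEq

namespace IsExtension

variable {k : ℕ} {Λ : KGraph k} {μ : Λ.Path} {x y : BoundaryPath Λ} {p q : Fin k → ℕ}

lemma withinDeg (h : IsExtension Λ μ x y) (hq : x.WithinDeg q) : y.WithinDeg (Λ.d μ + q) :=
  fun i => by rw [h.1 i, Pi.add_apply, Nat.cast_add]; exact add_le_add le_rfl (hq i)

lemma withinDeg_d (h : IsExtension Λ μ x y) : y.WithinDeg (Λ.d μ) := by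
  simpa using h.withinDeg (withinDeg_zero x)

lemma withinDeg_sub (h : IsExtension Λ μ x y) (hq : y.WithinDeg q) :
    x.WithinDeg (q - Λ.d μ) := fun i => by
  rw [Pi.sub_apply, ENat.natCast_sub, tsub_le_iff_left, ← h.1 i]
  exact hq i

lemma seg_zero_zero (h : IsExtension Λ μ x y) : y.seg 0 0 = Λ.r μ := by
  rw [← y.seg_r 0 _ zero_le h.withinDeg_d, h.2.1]

lemma seg_zero_add (h : IsExtension Λ μ x y) (hq : x.WithinDeg q) :
    y.seg 0 (Λ.d μ + q) = Λ.comp μ (x.seg 0 q) := by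
  rw [← y.seg_comp 0 _ _ zero_le le_self_add (h.withinDeg hq), h.2.1, h.2.2 q hq]

lemma seg_add (h : IsExtension Λ μ x y) (hpq : p ≤ q) (hq : x.WithinDeg q) :
    y.seg (Λ.d μ + p) (Λ.d μ + q) = x.seg p q := by
  rw [(seg_eq_initSeg_tailSeg le_self_add (add_le_add le_rfl hpq) (h.withinDeg hq)).2,
    add_tsub_cancel_left, h.2.2 q hq, seg_eq_tailSeg hpq hq]

lemma unique {z : BoundaryPath Λ} (hy : IsExtension Λ μ x y) (hz : IsExtension Λ μ x z) :
    BPEq y z := by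
  have hdeg : y.deg = z.deg := funext fun i => (hy.1 i).trans (hz.1 i).symm
  refine bpeq_of_seg_zero hdeg fun q hq => ?_
  have hq' := hy.withinDeg_sub hq
  have hle : q ≤ Λ.d μ + (q - Λ.d μ) := le_add_tsub
  rw [seg_zero_eq_initSeg hle (hy.withinDeg hq'), seg_zero_eq_initSeg hle (hz.withinDeg hq'),
    hy.seg_zero_add hq', hz.seg_zero_add hq']

lemma cancel {x' y' : BoundaryPath Λ} (hy : IsExtension Λ μ x y)
    (hy' : IsExtension Λ μ x' y') (h : BPEq y y') : BPEq x x' := by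
  have hdeg : x.deg = x'.deg := funext fun i => WithTop.add_left_cancel (ENat.natCast_ne_top _)
    ((hy.1 i).symm.trans ((congrFun h.1 i).trans (hy'.1 i)))
  refine ⟨hdeg, fun p q hpq hq => ?_⟩
  rw [← hy.seg_add hpq hq, ← hy'.seg_add hpq (WithinDeg.of_deg_eq hdeg hq),
    h.2 _ _ (add_le_add le_rfl hpq) (hy.withinDeg hq)]

lemma congr_left {x' : BoundaryPath Λ} (h : IsExtension Λ μ x y) (hx : BPEq x x') :
    IsExtension Λ μ x' y :=
  ⟨fun i => hx.1 ▸ h.1 i, h.2.1, fun p hp => by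
    have hp' := WithinDeg.of_deg_eq hx.1.symm hp
    rw [h.2.2 p hp', hx.2 0 p zero_le hp']⟩

lemma comp {A P : Λ.Path} {Y : BoundaryPath Λ} (hP : IsExtension Λ P x y)
    (hA : IsExtension Λ A y Y) (hs : Λ.s A = Λ.r P) : IsExtension Λ (Λ.comp A P) x Y := by
  rw [IsExtension, Λ.d_comp _ _ hs]
  refine ⟨fun i => ?_, ?_, fun p hp => ?_⟩
  · rw [hA.1 i, hP.1 i, Pi.add_apply, Nat.cast_add, add_assoc]
  · rw [hA.seg_zero_add hP.withinDeg_d, hP.2.1]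
  · rw [add_assoc, hA.seg_add le_self_add (hP.withinDeg hp), hP.2.2 p hp]

end IsExtension

namespace KGraph

variable {k : ℕ} {Λ : KGraph k}

section Extension

variable {μ : Λ.Path} {x : BoundaryPath Λ} {n N p : Fin k → ℕ}

/-- As `n - d μ` is truncated, this has degree `n ⊔ d μ`, and its initial segment of degree `n`
is `(μx)(0, n)`. -/
noncomputable def extInit (Λ : KGraph k) (μ : Λ.Path) (x : BoundaryPath Λ) (n : Fin k → ℕ) :
    Λ.Path :=
  Λ.comp μ (x.seg 0 (n - Λ.d μ))

lemma s_eq_r_seg_zero (hx : x.seg 0 0 = Λ.s μ) (hn : x.WithinDeg n) :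
    Λ.s μ = Λ.r (x.seg 0 n) := by
  rw [x.seg_r 0 n zero_le hn, hx]

lemma d_extInit (hx : x.seg 0 0 = Λ.s μ) (hn : x.WithinDeg (n - Λ.d μ)) :
    Λ.d (Λ.extInit μ x n) = Λ.d μ + (n - Λ.d μ) := by
  rw [extInit, Λ.d_comp _ _ (s_eq_r_seg_zero hx hn), d_seg_zero_s5 hn]

lemma le_d_extInit (hx : x.seg 0 0 = Λ.s μ) (hn : x.WithinDeg (n - Λ.d μ)) :
    n ≤ Λ.d (Λ.extInit μ x n) :=
  d_extInit hx hn ▸ le_add_tsub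

lemma initSeg_initSeg_extInit (hx : x.seg 0 0 = Λ.s μ) (hnN : n ≤ N)
    (hN : x.WithinDeg (N - Λ.d μ)) :
    Λ.initSeg (Λ.initSeg (Λ.extInit μ x N) N) n = Λ.initSeg (Λ.extInit μ x n) n := by
  have hsub : n - Λ.d μ ≤ N - Λ.d μ := tsub_le_tsub_right hnN _
  have hn := hN.mono hsub
  have hs : Λ.s (x.seg 0 (n - Λ.d μ)) = Λ.r (x.seg (n - Λ.d μ) (N - Λ.d μ)) := by
    rw [x.seg_s 0 _ zero_le hn, x.seg_r _ _ hsub hN]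
  have hsplit : Λ.extInit μ x N =
      Λ.comp (Λ.extInit μ x n) (x.seg (n - Λ.d μ) (N - Λ.d μ)) := by
    rw [extInit, extInit, ← x.seg_comp 0 _ _ zero_le hsub hN,
      Λ.comp_assoc _ _ _ (s_eq_r_seg_zero hx hn) hs]
  rw [← (initSeg_tailSeg_of_le hnN (le_d_extInit hx hN)).1, hsplit,
    initSeg_comp_of_le (by rw [extInit, Λ.s_comp _ _ (s_eq_r_seg_zero hx hn), hs])
      (le_d_extInit hx hn)]

/-- Where `μx` ends in direction `i`, so does `x`; local convexity carries the missing
`e_i`-edge from `(μx)(p)` to that end point. -/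
lemma not_hasEdge_s_initSeg_extInit (hlc : Λ.LocallyConvex) (hx : x.seg 0 0 = Λ.s μ)
    (hp : x.WithinDeg (p - Λ.d μ)) {i : Fin k} (hpi : (p i : ℕ∞) = Λ.d μ i + x.deg i) :
    ¬ Λ.HasEdge (Λ.s (Λ.initSeg (Λ.extInit μ x p) p)) i := by
  intro h
  obtain ⟨m, hm⟩ : ∃ m : ℕ, (m : ℕ∞) = x.deg i :=
    ENat.ne_top_iff_exists.mp fun htop => by simp [htop] at hpi
  rw [← hm] at hpi
  have hpi' : p i = Λ.d μ i + m := by exact_mod_cast hpi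
  have hedge := h.s_of_s_initSeg hlc (le_d_extInit hx hp)
    (by rw [d_extInit hx hp, Pi.add_apply, Pi.sub_apply]; omega)
  rw [extInit, Λ.s_comp _ _ (s_eq_r_seg_zero hx hp), x.seg_s 0 _ zero_le hp] at hedge
  obtain ⟨e, he, hde⟩ := hedge
  exact x.boundary _ hp i (by rw [← hm, Pi.sub_apply, hpi']; simp) e he hde

lemma exists_isExtension (hlc : Λ.LocallyConvex) (hx : x.seg 0 0 = Λ.s μ) :
    ∃ y, IsExtension Λ μ x y := by
  have hsub : ∀ n, (∀ i, (n i : ℕ∞) ≤ Λ.d μ i + x.deg i) → x.WithinDeg (n - Λ.d μ) :=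
    fun n hn i => by rw [Pi.sub_apply, ENat.natCast_sub, tsub_le_iff_left]; exact hn i
  refine ⟨ofInitSegs (fun i => Λ.d μ i + x.deg i)
    (fun n => Λ.initSeg (Λ.extInit μ x n) n)
    (fun n hn => d_initSeg (le_d_extInit hx (hsub n hn)))
    (fun n N hnN hN => initSeg_initSeg_extInit hx hnN (hsub N hN))
    (fun p hp i hpi => not_hasEdge_s_initSeg_extInit hlc hx (hsub p hp) hpi),
    fun i => rfl, ?_, fun p hp => ?_⟩
  · have : Λ.extInit μ x (Λ.d μ) = μ := by rw [extInit, tsub_self, hx, Λ.comp_id]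
    rw [ofInitSegs_seg_zero, this, initSeg_of_d_eq rfl]
  · have hs := s_eq_r_seg_zero hx hp
    have : Λ.extInit μ x (Λ.d μ + p) = Λ.comp μ (x.seg 0 p) := by
      rw [extInit, add_tsub_cancel_left]
    show Λ.tailSeg (Λ.initSeg _ _) _ = _
    rw [this, initSeg_of_d_eq (by rw [Λ.d_comp _ _ hs, d_seg_zero_s5 hp]),
      (initSeg_tailSeg_of_comp_eq hs rfl).2]

end Extension

section Chain

variable {F : ℕ → Λ.Path}

lemma initSeg_chain (hF : ∀ j, ∃ ρ, Λ.s (F j) = Λ.r ρ ∧ Λ.comp (F j) ρ = F (j + 1))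
    {j j' : ℕ} (h : j ≤ j') :
    Λ.d (F j) ≤ Λ.d (F j') ∧ ∀ n ≤ Λ.d (F j), Λ.initSeg (F j') n = Λ.initSeg (F j) n := by
  obtain ⟨ρ, hρ, hρF⟩ : ∃ ρ, Λ.s (F j) = Λ.r ρ ∧ Λ.comp (F j) ρ = F j' := by
    induction j', h using Nat.le_induction with
    | base => exact ⟨Λ.s (F j), (Λ.r_s _).symm, Λ.comp_id _⟩
    | succ j' _ ih =>
      obtain ⟨ρ, hρ, hρF⟩ := ih
      obtain ⟨σ, hσ, hσF⟩ := hF j'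
      rw [← hρF, Λ.s_comp _ _ hρ] at hσ
      rw [← hρF, Λ.comp_assoc _ _ _ hρ hσ] at hσF
      exact ⟨Λ.comp ρ σ, by rw [Λ.r_comp _ _ hσ, hρ], hσF⟩
  rw [← hρF]
  exact ⟨d_comp_le_left hρ, fun n hn => initSeg_comp_of_le hρ hn⟩

/-- The union of the chain is a boundary path: `F j ∈ Λ^{≤ (j, …, j)}` stops growing in
direction `i` only at a source without `e_i`-edges. -/
lemma exists_boundaryPath_of_chain (hlc : Λ.LocallyConvex)
    (hF : ∀ j, ∃ ρ, Λ.s (F j) = Λ.r ρ ∧ Λ.comp (F j) ρ = F (j + 1))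
    (hbd : ∀ j, F j ∈ Λ.boundedPaths (fun _ => j)) :
    ∃ x : BoundaryPath Λ, x.seg 0 0 = Λ.r (F 0) := by
  set deg : Fin k → ℕ∞ := fun i => ⨆ j, (Λ.d (F j) i : ℕ∞)
  have hJ : ∀ n, (∀ i, (n i : ℕ∞) ≤ deg i) → ∃ j, n ≤ Λ.d (F j) := fun n hn => by
    choose f hf using fun i => exists_le_of_natCast_le_iSup (hn i)
    exact ⟨Finset.univ.sup f, fun i =>
      (hf i).trans ((initSeg_chain hF (Finset.le_sup (Finset.mem_univ i))).1 i)⟩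
  set c : (Fin k → ℕ) → Λ.Path :=
    fun n => Λ.initSeg (F (Classical.epsilon fun j => n ≤ Λ.d (F j))) n
  have hc : ∀ n j, n ≤ Λ.d (F j) → c n = Λ.initSeg (F j) n := fun n j hj => by
    have hε := Classical.epsilon_spec (p := fun j => n ≤ Λ.d (F j)) ⟨j, hj⟩
    show Λ.initSeg (F _) n = _
    rw [← (initSeg_chain hF (le_max_left _ j)).2 n hε,
      (initSeg_chain hF (le_max_right _ j)).2 n hj]
  have hd : ∀ n, (∀ i, (n i : ℕ∞) ≤ deg i) → Λ.d (c n) = n := fun n hn => by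
    obtain ⟨j, hj⟩ := hJ n hn
    rw [hc n j hj, d_initSeg hj]
  have hco : ∀ n N, n ≤ N → (∀ i, (N i : ℕ∞) ≤ deg i) → Λ.initSeg (c N) n = c n :=
    fun n N hnN hN => by
      obtain ⟨j, hj⟩ := hJ N hN
      rw [hc N j hj, hc n j (hnN.trans hj), ← (initSeg_tailSeg_of_le hnN hj).1]
  have hb : ∀ p, (∀ i, (p i : ℕ∞) ≤ deg i) → ∀ i, (p i : ℕ∞) = deg i →
      ¬ Λ.HasEdge (Λ.s (c p)) i := fun p hp i hpi hedge => by
    obtain ⟨j, hj⟩ := hJ p hp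
    have hpJ : p ≤ Λ.d (F (max j (p i + 1))) :=
      hj.trans (initSeg_chain hF (le_max_left _ _)).1
    have hdJ : Λ.d (F (max j (p i + 1))) i = p i := by
      have hle : (Λ.d (F (max j (p i + 1))) i : ℕ∞) ≤ deg i :=
        le_iSup (fun j => (Λ.d (F j) i : ℕ∞)) _
      exact le_antisymm (by rwa [← hpi, Nat.cast_le] at hle) (hpJ i)
    rw [hc p _ hpJ] at hedge
    exact (mem_boundedPaths_iff.mp (hbd _)).2 i (by omega)
      (hedge.s_of_s_initSeg hlc hpJ hdJ.symm)
  refine ⟨ofInitSegs deg c hd hco hb, ?_⟩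
  rw [ofInitSegs_seg_zero, hc 0 0 zero_le, initSeg_zero]

end Chain

lemma exists_boundaryPath (hlc : Λ.LocallyConvex)
    (hex : ∀ v, Λ.IsVertex v → ∃ lam ∈ Λ.boundedPaths 1, Λ.r lam = v)
    {v : Λ.Path} (hv : Λ.IsVertex v) : ∃ x : BoundaryPath Λ, x.seg 0 0 = v := by
  choose step hstep hrstep using fun lam : Λ.Path => hex (Λ.s lam) (Λ.r_s lam)
  let F : ℕ → Λ.Path := fun j => Nat.rec v (fun _ lam => Λ.comp lam (step lam)) j
  have hbd : ∀ j, F j ∈ Λ.boundedPaths (fun _ => j) := by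
    intro j
    induction j with
    | zero =>
      have hdv : Λ.d v = 0 := by rw [← hv, Λ.d_r]
      exact mem_boundedPaths_iff.mpr ⟨hdv.le, fun i hi => by simp [F, hdv] at hi⟩
    | succ j ih => exact comp_mem_boundedPaths ih (hstep (F j)) (hrstep _).symm
  obtain ⟨x, hx⟩ :=
    exists_boundaryPath_of_chain hlc (fun j => ⟨step (F j), (hrstep _).symm, rfl⟩) hbd
  exact ⟨x, hx.trans hv⟩

lemma peq_refl (μ : Λ.Path) : Λ.peq μ μ :=
  ⟨rfl, fun _ _ _ _ hy hz => hy.unique hz⟩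

lemma peq_symm {μ ν : Λ.Path} (h : Λ.peq μ ν) : Λ.peq ν μ :=
  ⟨h.1.symm, fun x y z hx hy hz => (h.2 x z y (hx.trans h.1.symm) hz hy).symm⟩

lemma peq_comp (hlc : Λ.LocallyConvex) {A B P Q : Λ.Path} (hAB : Λ.peq A B) (hPQ : Λ.peq P Q)
    (hAP : Λ.s A = Λ.r P) (hBQ : Λ.s B = Λ.r Q) : Λ.peq (Λ.comp A P) (Λ.comp B Q) := by
  refine ⟨by rw [Λ.s_comp _ _ hAP, Λ.s_comp _ _ hBQ, hPQ.1], fun x Y Y' hx hY hY' => ?_⟩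
  rw [Λ.s_comp _ _ hAP] at hx
  obtain ⟨xP, hxP⟩ := exists_isExtension hlc hx
  obtain ⟨xQ, hxQ⟩ := exists_isExtension hlc (hx.trans hPQ.1)
  obtain ⟨Z, hZ⟩ := exists_isExtension hlc (hxP.seg_zero_zero.trans hAP.symm)
  obtain ⟨Z', hZ'⟩ := exists_isExtension hlc (hxQ.seg_zero_zero.trans hBQ.symm)
  have hZZ' : BPEq Z Z' := hAB.2 xP Z Z' (hxP.seg_zero_zero.trans hAP.symm) hZ
    (hZ'.congr_left (hPQ.2 x xP xQ hx hxP hxQ).symm)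
  exact (hY.unique (hxP.comp hZ hAP)).trans (hZZ'.trans ((hxQ.comp hZ' hBQ).unique hY'))

/-- `μ(Px) = ν(Px) = (νP)x = (μQ)x = μ(Qx)`, and `μ` cancels. -/
lemma peq_of_comp_eq (hlc : Λ.LocallyConvex) {μ ν P Q : Λ.Path} (hμν : Λ.peq μ ν)
    (hP : Λ.s ν = Λ.r P) (hQ : Λ.s μ = Λ.r Q) (hPQ : Λ.s P = Λ.s Q)
    (h : Λ.comp μ Q = Λ.comp ν P) : Λ.peq P Q := by
  refine ⟨hPQ, fun x y z _ hy hz => ?_⟩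
  have hy₀ : y.seg 0 0 = Λ.s μ := hy.seg_zero_zero.trans (hP.symm.trans hμν.1.symm)
  obtain ⟨Y, hY⟩ := exists_isExtension hlc hy₀
  obtain ⟨Z, hZ⟩ := exists_isExtension hlc (hz.seg_zero_zero.trans hQ.symm)
  obtain ⟨W, hW⟩ := exists_isExtension hlc (hy.seg_zero_zero.trans hP.symm)
  have hWZ : BPEq W Z := (hy.comp hW hP).unique (h ▸ hz.comp hZ hQ)
  exact hY.cancel hZ ((hμν.2 y Y W hy₀ hY hW).trans hWZ)

/-- With `w ∈ s(μ)Λ^{≤∞}`, cut `w` at `d μ` and at `d ν` in the directions where `w` is infinite.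
Where it is finite, `d μ` and `d ν` agree because `μw = νw`. -/
lemma exists_peq_at_source_of_peq (hlc : Λ.LocallyConvex) {μ ν : Λ.Path} (h : Λ.peq μ ν)
    {w : BoundaryPath Λ} (hw : w.seg 0 0 = Λ.s μ) :
    ∃ P Q, Λ.peq P Q ∧ Λ.r P = Λ.s μ ∧ Λ.r Q = Λ.s μ ∧ Λ.d ν + Λ.d P = Λ.d μ + Λ.d Q := by
  obtain ⟨y, hy⟩ := exists_isExtension hlc hw
  obtain ⟨z, hz⟩ := exists_isExtension hlc (hw.trans h.1)
  have hyz : BPEq y z := h.2 w y z hw hy hz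
  have hfin : ∀ i, w.deg i ≠ ⊤ → Λ.d μ i = Λ.d ν i := fun i hi =>
    Nat.cast_injective (R := ℕ∞) <| WithTop.add_right_cancel hi
      ((hy.1 i).symm.trans ((congrFun hyz.1 i).trans (hz.1 i)))
  set cut : (Fin k → ℕ) → Fin k → ℕ := fun m i => if w.deg i = ⊤ then m i else 0
  have hcut : ∀ m, w.WithinDeg (cut m) := fun m i => by
    by_cases hi : w.deg i = ⊤ <;> simp [cut, hi]
  have hsum : Λ.d ν + cut (Λ.d μ) = Λ.d μ + cut (Λ.d ν) := funext fun i => by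
    by_cases hi : w.deg i = ⊤
    · simp [cut, hi, add_comm]
    · simp [cut, hi, hfin i hi]
  have hr : ∀ m, Λ.r (w.seg 0 (cut m)) = Λ.s μ := fun m => by
    rw [w.seg_r 0 _ zero_le (hcut m), hw]
  have hcomp : Λ.comp μ (w.seg 0 (cut (Λ.d ν))) = Λ.comp ν (w.seg 0 (cut (Λ.d μ))) := by
    rw [← hy.seg_zero_add (hcut _), ← hz.seg_zero_add (hcut _), hsum]
    exact hyz.2 0 _ zero_le (hy.withinDeg (hcut _))
  have hP : Λ.s ν = Λ.r (w.seg 0 (cut (Λ.d μ))) := by rw [hr, h.1]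
  have hQ : Λ.s μ = Λ.r (w.seg 0 (cut (Λ.d ν))) := (hr _).symm
  refine ⟨_, _, peq_of_comp_eq hlc h hP hQ ?_ hcomp, hr _, hr _, ?_⟩
  · rw [← Λ.s_comp _ _ hP, ← Λ.s_comp _ _ hQ, hcomp]
  · rw [d_seg_zero_s5 (hcut _), d_seg_zero_s5 (hcut _), hsum]

lemma zero_mem_per : (0 : Fin k → ℤ) ∈ Λ.Per :=
  let ⟨μ⟩ := Λ.nonempty_path
  ⟨μ, μ, peq_refl μ, by funext i; simp⟩

lemma neg_mem_per {g : Fin k → ℤ} (hg : g ∈ Λ.Per) : -g ∈ Λ.Per := by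
  obtain ⟨μ, ν, h, rfl⟩ := hg
  exact ⟨ν, μ, peq_symm h, by funext i; simp⟩

lemma add_mem_per (hlc : Λ.LocallyConvex)
    (hex : ∀ v, Λ.IsVertex v → ∃ lam ∈ Λ.boundedPaths 1, Λ.r lam = v)
    (hconn : ∀ v w, Λ.IsVertex v → Λ.IsVertex w →
      ∃ α β : Λ.Path, Λ.r α = v ∧ Λ.r β = w ∧ Λ.s α = Λ.s β)
    {g h : Fin k → ℤ} (hg : g ∈ Λ.Per) (hh : h ∈ Λ.Per) : g + h ∈ Λ.Per := by
  obtain ⟨μ₁, ν₁, h₁, rfl⟩ := hg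
  obtain ⟨μ₂, ν₂, h₂, rfl⟩ := hh
  obtain ⟨α, β, hα, hβ, hαβ⟩ := hconn _ _ (Λ.r_s μ₁) (Λ.r_s μ₂)
  have hμ₁α : Λ.s μ₁ = Λ.r α := hα.symm
  have hν₁α : Λ.s ν₁ = Λ.r α := h₁.1 ▸ hα.symm
  have hμ₂β : Λ.s μ₂ = Λ.r β := hβ.symm
  have hν₂β : Λ.s ν₂ = Λ.r β := h₂.1 ▸ hβ.symm
  obtain ⟨w, hw⟩ := exists_boundaryPath hlc hex (Λ.r_s (Λ.comp μ₂ β))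
  obtain ⟨P, Q, hPQ, hrP, hrQ, hd⟩ :=
    exists_peq_at_source_of_peq hlc (peq_comp hlc h₂ (peq_refl β) hμ₂β hν₂β) hw
  have hαP : Λ.s (Λ.comp μ₁ α) = Λ.r P := by
    rw [hrP, Λ.s_comp _ _ hμ₁α, Λ.s_comp _ _ hμ₂β, hαβ]
  have hαQ : Λ.s (Λ.comp ν₁ α) = Λ.r Q := by
    rw [hrQ, Λ.s_comp _ _ hν₁α, Λ.s_comp _ _ hμ₂β, hαβ]
  refine ⟨_, _, peq_comp hlc (peq_comp hlc h₁ (peq_refl α) hμ₁α hν₁α) hPQ hαP hαQ,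
    funext fun i => ?_⟩
  have hdi := congrFun hd i
  simp only [Pi.add_apply, Λ.d_comp _ _ hαP, Λ.d_comp _ _ hαQ, Λ.d_comp _ _ hμ₁α,
    Λ.d_comp _ _ hν₁α, Λ.d_comp _ _ hμ₂β, Λ.d_comp _ _ hν₂β] at hdi ⊢
  push_cast
  omega

end KGraph

theorem statement5_general {k : ℕ} (Λ : KGraph k) (hlc : Λ.LocallyConvex)
    (hmt : Λ.IsMaximalTail {v | Λ.IsVertex v}) :
    ∃ S : AddSubgroup (Fin k → ℤ), (S : Set (Fin k → ℤ)) = Λ.Per := by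
  obtain ⟨-, -, -, hex, hconn⟩ := hmt
  have hex' : ∀ v, Λ.IsVertex v → ∃ lam ∈ Λ.boundedPaths 1, Λ.r lam = v := fun v hv =>
    let ⟨lam, hlam, hr, _⟩ := hex v hv 1
    ⟨lam, hlam, hr⟩
  exact ⟨{ carrier := Λ.Per
           zero_mem' := KGraph.zero_mem_per
           add_mem' := KGraph.add_mem_per hlc hex' fun v w hv hw => hconn v hv w hw
           neg_mem' := KGraph.neg_mem_per }, rfl⟩

/-- Corollary 3.7, second part: If `Λ` is a locally convex
row-finite `k`-graph and `Λ^0` is a maximal tail, then `Per(Λ)` is a subgroup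
of `ℤ^k`. -/
theorem statement5 {k : ℕ} (Λ : KGraph k) (hlc : Λ.LocallyConvex)
    (hrf : Λ.RowFinite) (hmt : Λ.IsMaximalTail {v | Λ.IsVertex v}) :
    ∃ S : AddSubgroup (Fin k → ℤ), (S : Set (Fin k → ℤ)) = Λ.Per :=
  statement5_general Λ hlc hmt
end
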